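/- arXiv:1506.07573 — 2 statements merged into one kernel-verified Lean document; each statement's English description precedes it below -/
import Mathlib

section
/- In a rooted tree in which every node is either an internal node (with at least one child) of type 0,1,2,3, subject to the constraint that a node of type 0 or 1 never has exactly one child whose type lies in {0,1}, the number N of internal nodes of type 1 satisfies N ≤ (2n − 1)/3, where n is the total number of nodes. -/
/-- Finite rooted trees with nodes labelled by a type in `{0,1,2,3}`. -/
inductive LTree where
  | node : Fin 4 → List LTree → LTree

namespace LTree

/-- Total number of nodes. -/
def size : LTree → ℕ
  | .node _ ts => 1 + (ts.attach.map (fun t => size t.1)).sum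
decreasing_by simp only [LTree.node.sizeOf_spec]; exact Nat.lt_of_lt_of_le (List.sizeOf_lt_of_mem t.2) (by omega)

/-- The type label of the root node. -/
def rootType : LTree → Fin 4
  | .node ty _ => ty

/-- Number of internal (at least one child) nodes of type 1. -/
def countInternal1 : LTree → ℕ
  | .node ty ts =>
      (if ty = 1 ∧ ts.isEmpty = false then 1 else 0) +
        (ts.attach.map (fun t => countInternal1 t.1)).sum
decreasing_by simp only [LTree.node.sizeOf_spec]; exact Nat.lt_of_lt_of_le (List.sizeOf_lt_of_mem t.2) (by omega)

/-- Admissibility: a node of type 0 or 1 never has exactly one child whose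
type lies in `{0,1}`. -/
def admissible : LTree → Prop
  | .node ty ts =>
      (∀ t ∈ ts.attach, admissible t.1) ∧
      ((ty = 0 ∨ ty = 1) →
        ¬ ∃ t, ts = [t] ∧ (rootType t = 0 ∨ rootType t = 1))
decreasing_by simp only [LTree.node.sizeOf_spec]; exact Nat.lt_of_lt_of_le (List.sizeOf_lt_of_mem t.2) (by omega)

end LTree

/-!
Strengthen the bound to `3 N + 1 ≤ 2 n`, and to `3 N + 2 ≤ 2 n` when the root has type 2 or 3,
and induct on the tree. A node with at least two children gains at least one unit of slack per
child; a type-1 node with a single child is only possible when that child has type 2 or 3, whose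
extra unit of slack pays for the new internal type-1 node.
-/

theorem List.sum_map_add_length_le {α : Type*} {l : List α} {f g : α → ℕ}
    (h : ∀ a ∈ l, f a + 1 ≤ g a) : (l.map f).sum + l.length ≤ (l.map g).sum := by
  simpa [List.sum_map_add] using List.sum_le_sum h

namespace LTree

theorem induction_mem {P : LTree → Prop}
    (node : ∀ ty ts, (∀ t ∈ ts, P t) → P (node ty ts)) : ∀ θ, P θ
  | .node ty ts => node ty ts fun t _ => induction_mem node t
decreasing_by simp only [LTree.node.sizeOf_spec]; exact Nat.lt_of_lt_of_le (List.sizeOf_lt_of_mem ‹_›) (by omega)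

theorem size_node (ty : Fin 4) (ts : List LTree) :
    (node ty ts).size = 1 + (ts.map size).sum := by
  rw [size, List.map_attach_eq_pmap, List.pmap_eq_map]

theorem countInternal1_node_nil (ty : Fin 4) : (node ty []).countInternal1 = 0 := by
  simp [countInternal1]

theorem countInternal1_node_le (ty : Fin 4) (ts : List LTree) :
    (node ty ts).countInternal1 ≤ 1 + (ts.map countInternal1).sum := by
  rw [countInternal1, List.map_attach_eq_pmap, List.pmap_eq_map]
  split_ifs <;> omega

theorem countInternal1_node_of_ne_one {ty : Fin 4} (hty : ty ≠ 1) (ts : List LTree) :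
    (node ty ts).countInternal1 = (ts.map countInternal1).sum := by
  simp [countInternal1, hty]

theorem admissible_node {ty : Fin 4} {ts : List LTree} :
    (node ty ts).admissible ↔ (∀ t ∈ ts, t.admissible) ∧
      ((ty = 0 ∨ ty = 1) → ¬ ∃ t, ts = [t] ∧ (rootType t = 0 ∨ rootType t = 1)) := by
  rw [admissible]
  simp

theorem rootType_eq_two_or_three_of_admissible_singleton {t : LTree}
    (h : (node 1 [t]).admissible) : t.rootType = 2 ∨ t.rootType = 3 := by
  have := (admissible_node.1 h).2 (Or.inr rfl)
  simp only [List.cons.injEq, and_true, exists_eq_left', not_or] at this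
  omega

theorem admissible.three_mul_countInternal1_add_le {θ : LTree} (hθ : θ.admissible) :
    3 * θ.countInternal1 + 1 ≤ 2 * θ.size ∧
      (θ.rootType = 2 ∨ θ.rootType = 3 → 3 * θ.countInternal1 + 2 ≤ 2 * θ.size) := by
  induction θ using induction_mem with
  | node ty ts ih =>
    have hchild : ∀ t ∈ ts, 3 * t.countInternal1 + 1 ≤ 2 * t.size ∧
        (t.rootType = 2 ∨ t.rootType = 3 → 3 * t.countInternal1 + 2 ≤ 2 * t.size) :=
      fun t ht => ih t ht ((admissible_node.1 hθ).1 t ht)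
    have hle := countInternal1_node_le ty ts
    have heq := fun hty : ty ≠ 1 => countInternal1_node_of_ne_one hty ts
    rw [size_node, show (node ty ts).rootType = ty from rfl]
    rcases ts with _ | ⟨t, _ | ⟨u, us⟩⟩
    · simp [countInternal1_node_nil]
    · obtain ⟨ht, ht23⟩ := hchild t (by simp)
      simp only [List.map_cons, List.map_nil, List.sum_cons, List.sum_nil] at hle heq ⊢
      by_cases hty : ty = 1
      · subst hty
        have := ht23 (rootType_eq_two_or_three_of_admissible_singleton hθ)
        omega
      · have := heq hty
        omega
    · have hsum := List.sum_map_add_length_le (f := fun t => 3 * t.countInternal1)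
        (g := fun t => 2 * t.size) fun t ht => (hchild t ht).1
      simp only [List.sum_map_mul_left, List.length_cons] at hsum
      by_cases hty : ty = 1
      · omega
      · have := heq hty
        omega

end LTree

/-- Lemma 2.1: the number of internal nodes of type 1 in an admissible tree
with `n` nodes is at most `(2n-1)/3`. -/
theorem internal_type1_bound (θ : LTree) (hθ : θ.admissible) :
    3 * θ.countInternal1 ≤ 2 * θ.size - 1 := by
  have := hθ.three_mul_countInternal1_add_le.1
  omega
end

section
/- The bound N_i¹(θ) ≤ (2n−1)/3 for the number of internal nodes of type 1 is optimal: for every k ≥ 1 there exists an admissible labelled rooted tree with n = 2^k − 1 + 2^{k−1} nodes in which the number of internal nodes of type 1 equals 2^k − 1 = (2n − 1)/3. -/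
namespace LTree

theorem countInternal1_node (ty : Fin 4) (ts : List LTree) :
    (node ty ts).countInternal1 =
      (if ty = 1 ∧ ts.isEmpty = false then 1 else 0) + (ts.map countInternal1).sum := by
  rw [countInternal1, List.map_attach_eq_pmap, List.pmap_eq_map]

theorem admissible_node_iff (ty : Fin 4) (ts : List LTree) :
    (node ty ts).admissible ↔ (∀ t ∈ ts, t.admissible) ∧
      ((ty = 0 ∨ ty = 1) → ¬ ∃ t, ts = [t] ∧ (rootType t = 0 ∨ rootType t = 1)) := by
  rw [admissible]
  simp only [List.mem_attach, true_implies, Subtype.forall]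

def extremalTree : ℕ → LTree
  | 0 => node 1 [node 2 []]
  | m + 1 => node 1 [extremalTree m, extremalTree m]

theorem size_extremalTree (m : ℕ) : (extremalTree m).size + 1 = 3 * 2 ^ m := by
  induction m with
  | zero => simp [extremalTree, size_node]
  | succ m ih => simp only [extremalTree, size_node, List.map, List.sum_cons, List.sum_nil]; omega

theorem countInternal1_extremalTree (m : ℕ) :
    (extremalTree m).countInternal1 + 1 = 2 ^ (m + 1) := by
  induction m with
  | zero => simp [extremalTree, countInternal1_node]
  | succ m ih =>
    simp only [extremalTree, countInternal1_node, List.map, List.sum_cons, List.sum_nil,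
      List.isEmpty_cons, and_self, if_true]
    omega

theorem admissible_extremalTree (m : ℕ) : (extremalTree m).admissible := by
  induction m with
  | zero => simp [extremalTree, admissible_node_iff, rootType]
  | succ m ih => simp [extremalTree, admissible_node_iff, ih]

end LTree

/-- Optimality of Lemma 2.1: for every `k ≥ 1` there is an admissible tree
with `n = 2^k - 1 + 2^(k-1)` nodes whose number of internal type-1 nodes
equals `2^k - 1 = (2n-1)/3`. -/
theorem internal_type1_bound_optimal (k : ℕ) (hk : 1 ≤ k) :
    ∃ θ : LTree, θ.admissible ∧
      θ.size = 2 ^ k - 1 + 2 ^ (k - 1) ∧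
      θ.countInternal1 = 2 ^ k - 1 ∧
      3 * θ.countInternal1 = 2 * θ.size - 1 := by
  obtain ⟨m, rfl⟩ : ∃ m, k = m + 1 := ⟨k - 1, by omega⟩
  have hsize := LTree.size_extremalTree m
  have hcount := LTree.countInternal1_extremalTree m
  rw [pow_succ] at hcount ⊢
  rw [Nat.add_sub_cancel]
  exact ⟨LTree.extremalTree m, LTree.admissible_extremalTree m, by omega, by omega, by omega⟩
end
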